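/- arXiv:1904.12350 — 5 statements merged into one kernel-verified Lean document; each statement's English description precedes it below -/
import Mathlib

section
/- Let G be a group and let T = {g ∈ G : g² = 1 and g ≠ 1} be its set of elements of order two. In the quotient abelian group Q = Z[G]/⟨g + g⁻¹ (for all g ∈ G), 1⟩ of the integral group ring, the image of each t ∈ T has order exactly 2, and the images of distinct elements of T are linearly independent over F₂; hence they span a subgroup of Q isomorphic to the F₂-vector space with basis T. -/
/-!
Reducing coefficients mod 2 and restricting them to the involutions `T` is a homomorphism
`ℤ[G] → (T →₀ 𝔽₂)` that kills the relations: `1 ∉ T`, and for `g + g⁻¹` either `g = g⁻¹ ∈ T`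
contributes `2 ≡ 0`, or neither `g` nor `g⁻¹` lies in `T`. On the quotient it sends `[t]` to the
basis vector `e_t`. Since `2 [t] = [t + t⁻¹] = 0`, the assignment `e_t ↦ [t]` defines a
homomorphism `(T →₀ 𝔽₂) → Q`, which the mod-2 map inverts from the left; so it is injective, and its
image is the span of the `[t]`.
-/

/-- The relation subgroup of the integral group ring `G →₀ ℤ`
generated by the identity element `1` and all elements `g + g⁻¹`. -/
noncomputable def relQ (G : Type*) [Group G] : AddSubgroup (G →₀ ℤ) :=
  AddSubgroup.closure ({Finsupp.single (1 : G) (1 : ℤ)} ∪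
    {x | ∃ g : G, x = Finsupp.single g 1 + Finsupp.single g⁻¹ 1})

section ZModTwoFamily

variable {ι M : Type*} [AddCommGroup M] (v : ι → M)

noncomputable def Finsupp.zmodTwoLift (hv : ∀ i, 2 • v i = 0) : (ι →₀ ZMod 2) →+ M :=
  Finsupp.liftAddHom fun i =>
    ZMod.lift 2 ⟨zmultiplesHom M (v i), by rw [zmultiplesHom_apply]; exact_mod_cast hv i⟩

variable (hv : ∀ i, 2 • v i = 0)

@[simp]
lemma Finsupp.zmodTwoLift_single (i : ι) (c : ZMod 2) :
    Finsupp.zmodTwoLift v hv (Finsupp.single i c) = c.val • v i := by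
  rw [Finsupp.zmodTwoLift, Finsupp.liftAddHom_apply_single]
  conv_lhs => rw [← ZMod.intCast_zmod_cast c]
  rw [ZMod.lift_coe]
  simp only [zmultiplesHom_apply]
  rw [ZMod.cast_eq_val, natCast_zsmul]

lemma Finsupp.zmodTwoLift_single_one (i : ι) :
    Finsupp.zmodTwoLift v hv (Finsupp.single i 1) = v i := by
  simp [ZMod.val_one'' (by decide : (2 : ℕ) ≠ 1)]

lemma Finsupp.range_zmodTwoLift :
    (Finsupp.zmodTwoLift v hv).range = AddSubgroup.closure (Set.range v) := by
  refine le_antisymm ?_ ((AddSubgroup.closure_le _).2 ?_)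
  · rintro _ ⟨x, rfl⟩
    induction x using Finsupp.induction_linear with
    | zero => simp
    | add a b ha hb => simpa using add_mem ha hb
    | single i c =>
      simpa using nsmul_mem (AddSubgroup.subset_closure (Set.mem_range_self i)) c.val
  · rintro _ ⟨i, rfl⟩
    exact ⟨Finsupp.single i 1, Finsupp.zmodTwoLift_single_one v hv i⟩

variable {v hv} in
lemma Finsupp.leftInverse_zmodTwoLift {ψ : M →+ (ι →₀ ZMod 2)}
    (hψ : ∀ i, ψ (v i) = Finsupp.single i 1) :
    Function.LeftInverse ψ (Finsupp.zmodTwoLift v hv) := by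
  suffices ψ.comp (Finsupp.zmodTwoLift v hv) = AddMonoidHom.id _ from DFunLike.congr_fun this
  refine Finsupp.addHom_ext fun i c => ?_
  simp [hψ, Finsupp.smul_single]

noncomputable def Finsupp.zmodTwoEquivClosure {ψ : M →+ (ι →₀ ZMod 2)}
    (hψ : ∀ i, ψ (v i) = Finsupp.single i 1) :
    (ι →₀ ZMod 2) ≃+ AddSubgroup.closure (Set.range v) :=
  (AddMonoidHom.ofInjective (Finsupp.leftInverse_zmodTwoLift hψ).injective).trans
    (AddEquiv.addSubgroupCongr (Finsupp.range_zmodTwoLift v hv))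

lemma Finsupp.zmodTwoEquivClosure_single {ψ : M →+ (ι →₀ ZMod 2)}
    (hψ : ∀ i, ψ (v i) = Finsupp.single i 1) (i : ι) :
    (Finsupp.zmodTwoEquivClosure v hv hψ (Finsupp.single i 1) : M) = v i := by
  simp only [Finsupp.zmodTwoEquivClosure, AddEquiv.trans_apply, AddEquiv.addSubgroupCongr_apply,
    AddMonoidHom.ofInjective_apply, Finsupp.zmodTwoLift_single_one]

end ZModTwoFamily

section Involutions

variable (G : Type*) [Group G]

def involutions : Set G := {g | g ^ 2 = 1 ∧ g ≠ 1}

variable {G} in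
lemma inv_eq_self_of_mem_involutions {t : G} (ht : t ∈ involutions G) : t⁻¹ = t :=
  inv_eq_of_mul_eq_one_right (by simpa [pow_two] using ht.1)

noncomputable def involutionParity : (G →₀ ℤ) →+ (involutions G →₀ ZMod 2) :=
  (Finsupp.mapRange.addMonoidHom (Int.castAddHom (ZMod 2))).comp
    Finsupp.subtypeDomainAddMonoidHom

@[simp]
lemma involutionParity_apply (x : G →₀ ℤ) (t : involutions G) :
    involutionParity G x t = (x t : ZMod 2) := rfl

lemma relQ_le_ker_involutionParity : relQ G ≤ (involutionParity G).ker := by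
  rw [relQ, AddSubgroup.closure_le]
  rintro _ (rfl | ⟨g, rfl⟩) <;> ext ⟨t, ht⟩
  · simp [Ne.symm ht.2]
  · by_cases hg : g = t
    · subst hg
      simp [inv_eq_self_of_mem_involutions ht, CharTwo.add_self_eq_zero]
    · have hg' : g⁻¹ ≠ t := fun h => hg (by rw [← inv_eq_self_of_mem_involutions ht, ← h, inv_inv])
      simp [hg, hg']

noncomputable def involutionParityQuot : (G →₀ ℤ) ⧸ relQ G →+ (involutions G →₀ ZMod 2) :=
  QuotientAddGroup.lift _ _ (relQ_le_ker_involutionParity G)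

@[simp]
lemma involutionParityQuot_mk (x : G →₀ ℤ) (t : involutions G) :
    involutionParityQuot G (x : (G →₀ ℤ) ⧸ relQ G) t = (x t : ZMod 2) := rfl

lemma involutionParityQuot_mk_single (t : involutions G) :
    involutionParityQuot G (QuotientAddGroup.mk' (relQ G) (Finsupp.single (t : G) 1)) =
      Finsupp.single t 1 := by
  classical
  ext t'
  simp [Finsupp.single_apply, Subtype.ext_iff]

variable {G} in
lemma two_nsmul_mk_single_of_mem_involutions {t : G} (ht : t ∈ involutions G) :
    2 • QuotientAddGroup.mk' (relQ G) (Finsupp.single t 1) = 0 := by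
  rw [← map_nsmul, QuotientAddGroup.mk'_apply, QuotientAddGroup.eq_zero_iff, two_nsmul]
  nth_rewrite 2 [← inv_eq_self_of_mem_involutions ht]
  exact AddSubgroup.subset_closure (Or.inr ⟨t, rfl⟩)

end Involutions

theorem stmt0 (G : Type*) [Group G] :
    ∀ (T : Set G), T = {g | g ^ 2 = 1 ∧ g ≠ 1} →
    ∀ π : (G →₀ ℤ) →+ (G →₀ ℤ) ⧸ relQ G, π = QuotientAddGroup.mk' (relQ G) →
    (∀ t ∈ T, addOrderOf (π (Finsupp.single t 1)) = 2) ∧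
    (∀ s : Finset G, ↑s ⊆ T → (∑ t ∈ s, π (Finsupp.single t 1)) = 0 → s = ∅) ∧
    ∃ e : (T →₀ ZMod 2) ≃+
        AddSubgroup.closure ((fun t : G => π (Finsupp.single t 1)) '' T),
      ∀ t : T, (e (Finsupp.single t 1) : (G →₀ ℤ) ⧸ relQ G) =
        π (Finsupp.single (t : G) 1) := by
  classical
  rintro T rfl π rfl
  set v : involutions G → (G →₀ ℤ) ⧸ relQ G :=
    fun t => QuotientAddGroup.mk' (relQ G) (Finsupp.single (t : G) 1)
  have hv (t : involutions G) : 2 • v t = 0 := two_nsmul_mk_single_of_mem_involutions t.2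
  have hψ (t : involutions G) : involutionParityQuot G (v t) = Finsupp.single t 1 :=
    involutionParityQuot_mk_single G t
  refine ⟨fun t ht => addOrderOf_eq_prime (hv ⟨t, ht⟩) fun h => ?_, fun s hs hsum => ?_, ?_⟩
  · have h' := hψ ⟨t, ht⟩
    rw [show v ⟨t, ht⟩ = 0 from h, map_zero] at h'
    exact one_ne_zero (Finsupp.single_eq_zero.1 h'.symm)
  · refine Finset.eq_empty_of_forall_notMem fun t ht => ?_
    rw [← map_sum] at hsum
    simpa [Finsupp.finsetSum_apply, Finsupp.single_apply, ht] using
      congr(involutionParityQuot G $hsum ⟨t, hs ht⟩)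
  · rw [Set.image_eq_range]
    exact ⟨Finsupp.zmodTwoEquivClosure v hv hψ, Finsupp.zmodTwoEquivClosure_single v hv hψ⟩
end

section
/- Let A be an abelian group, G a group, Q = Z[G]/⟨g + g⁻¹, 1⟩, and let μ : A → Q be a map satisfying μ(a + b) = μ(a) + μ(b) + [λ(a,b)] for a biadditive map λ : A × A → Z[G] with λ identically zero, and satisfying μ(a) = conj(μ(a)) for all a (where conj is the involution induced by g ↦ g⁻¹). Then μ is a group homomorphism whose image lies in the subgroup F₂T of Q, and in particular μ(2a) = 0 for all a ∈ A. -/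
/-- The involution of the integral group ring induced by `g ↦ g⁻¹`. -/
noncomputable def conjHom (G : Type*) [Group G] : (G →₀ ℤ) →+ (G →₀ ℤ) :=
  Finsupp.mapDomain.addMonoidHom (fun g : G => g⁻¹)

section

open Finsupp

variable {G : Type*} [Group G]

/-- The subgroup `F₂T` of `Q`. -/
noncomputable def involutionSubgroup (G : Type*) [Group G] : AddSubgroup ((G →₀ ℤ) ⧸ relQ G) :=
  AddSubgroup.closure
    ((fun t : G => QuotientAddGroup.mk' (relQ G) (single t 1)) '' {g | g ^ 2 = 1 ∧ g ≠ 1})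

lemma conjHom_single (g : G) (c : ℤ) : conjHom G (single g c) = single g⁻¹ c := by
  simp [conjHom, mapDomain.addMonoidHom_apply, mapDomain_single]

lemma conjHom_apply (x : G →₀ ℤ) (g : G) : conjHom G x g = x g⁻¹ := by
  rw [conjHom, mapDomain.addMonoidHom_apply, ← inv_inv g, inv_inv g⁻¹]
  exact mapDomain_apply inv_injective x g⁻¹

lemma single_one_mem_relQ (c : ℤ) : single (1 : G) c ∈ relQ G := by
  rw [← smul_single_one]
  exact (relQ G).zsmul_mem (AddSubgroup.subset_closure (Set.mem_union_left _ rfl)) c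

lemma single_add_single_inv_mem_relQ (g : G) (c : ℤ) :
    single g c + single g⁻¹ c ∈ relQ G := by
  have hsmul : single g c + single g⁻¹ c = c • (single g 1 + single g⁻¹ 1) := by
    rw [smul_add, smul_single_one, smul_single_one]
  rw [hsmul]
  exact (relQ G).zsmul_mem (AddSubgroup.subset_closure (Set.mem_union_right _ ⟨g, rfl⟩)) c

lemma add_conjHom_mem_relQ (x : G →₀ ℤ) : x + conjHom G x ∈ relQ G := by
  induction x using Finsupp.induction_linear with
  | zero => simp [(relQ G).zero_mem]
  | add x y hx hy =>
    rw [map_add, add_add_add_comm]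
    exact (relQ G).add_mem hx hy
  | single g c =>
    rw [conjHom_single]
    exact single_add_single_inv_mem_relQ g c

lemma conjHom_conjHom (x : G →₀ ℤ) : conjHom G (conjHom G x) = x := by
  ext g
  simp [conjHom_apply]

lemma mk'_conjHom (x : G →₀ ℤ) :
    QuotientAddGroup.mk' (relQ G) (conjHom G x) = -QuotientAddGroup.mk' (relQ G) x := by
  rw [eq_neg_iff_add_eq_zero, add_comm, ← map_add, QuotientAddGroup.mk'_apply,
    QuotientAddGroup.eq_zero_iff]
  exact add_conjHom_mem_relQ x

lemma relQ_le_ker_id_sub_conjHom : relQ G ≤ (AddMonoidHom.id _ - conjHom G).ker := by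
  refine (AddSubgroup.closure_le _).mpr ?_
  rintro _ (rfl | ⟨g, rfl⟩)
  · simp [conjHom_single]
  · simp only [SetLike.mem_coe, AddMonoidHom.mem_ker, AddMonoidHom.sub_apply,
      AddMonoidHom.id_apply, map_add, conjHom_single, inv_inv]
    abel

lemma conjHom_eq_self_of_mk'_eq {x : G →₀ ℤ}
    (hx : QuotientAddGroup.mk' (relQ G) (conjHom G x) = QuotientAddGroup.mk' (relQ G) x) :
    conjHom G x = x := by
  have hmem : -conjHom G x + x - conjHom G (-conjHom G x + x) = 0 :=
    relQ_le_ker_id_sub_conjHom (QuotientAddGroup.eq.mp hx)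
  have htwo : (2 : ℕ) • (x - conjHom G x) = 0 := by
    rw [map_add, map_neg, conjHom_conjHom] at hmem
    rw [two_nsmul, ← hmem]
    abel
  exact (sub_eq_zero.mp ((smul_eq_zero.mp htwo).resolve_left two_ne_zero)).symm

lemma mk_single_mem_involutionSubgroup {g : G} (hg : g⁻¹ = g) (c : ℤ) :
    QuotientAddGroup.mk' (relQ G) (single g c) ∈ involutionSubgroup G := by
  by_cases h1 : g = 1
  · rw [h1, QuotientAddGroup.mk'_apply, (QuotientAddGroup.eq_zero_iff _).mpr
      (single_one_mem_relQ c)]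
    exact zero_mem _
  · unfold involutionSubgroup
    rw [← smul_single_one, map_zsmul]
    have hg2 : g ^ 2 = 1 := by rw [sq, ← inv_eq_iff_mul_eq_one, hg]
    exact AddSubgroup.zsmul_mem _
      (AddSubgroup.subset_closure (Set.mem_image_of_mem _ (Set.mem_ofPred.mpr ⟨hg2, h1⟩))) c

lemma mk_mem_involutionSubgroup_of_conjHom_eq {x : G →₀ ℤ} (hx : conjHom G x = x) :
    QuotientAddGroup.mk' (relQ G) x ∈ involutionSubgroup G := by
  classical
  let _ : LinearOrder G := linearOrderOfSTO WellOrderingRel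
  set y := x.filter fun g => g < g⁻¹
  set z := x.filter fun g => g⁻¹ = g
  have hsplit : x = z + (y + conjHom G y) := by
    ext g
    have hinv : x g⁻¹ = x g := by rw [← conjHom_apply, hx]
    simp only [coe_add, Pi.add_apply, conjHom_apply, filter_apply, inv_inv, z, y, hinv]
    rcases lt_trichotomy g g⁻¹ with h | h | h
    · simp [h, h.ne', not_lt_of_gt h]
    · simp [← h]
    · simp [h, h.ne, not_lt_of_gt h]
  have hz : QuotientAddGroup.mk' (relQ G) z ∈ involutionSubgroup G := by
    rw [← sum_single z, map_finsuppSum]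
    refine AddSubgroup.sum_mem _ fun g hg => mk_single_mem_involutionSubgroup ?_ _
    rw [support_filter, Finset.mem_filter] at hg
    exact hg.2
  rwa [hsplit, map_add, map_add, mk'_conjHom, add_neg_cancel, add_zero]

end

theorem stmt2_general (A : Type*) [AddCommGroup A] (G : Type*) [Group G]
    (π : (G →₀ ℤ) →+ (G →₀ ℤ) ⧸ relQ G) (hπ : π = QuotientAddGroup.mk' (relQ G))
    (conjQ : ((G →₀ ℤ) ⧸ relQ G) →+ ((G →₀ ℤ) ⧸ relQ G))
    (hconjQ : ∀ x : G →₀ ℤ, conjQ (π x) = π (conjHom G x))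
    (μ : A → (G →₀ ℤ) ⧸ relQ G) (lam : A → A → (G →₀ ℤ))
    (hlam : ∀ a b : A, lam a b = 0)
    (hμ : ∀ a b : A, μ (a + b) = μ a + μ b + π (lam a b))
    (hfix : ∀ a : A, conjQ (μ a) = μ a) :
    (∀ a b : A, μ (a + b) = μ a + μ b) ∧
    (∀ a : A, μ a ∈ AddSubgroup.closure
      ((fun t : G => π (Finsupp.single t 1)) '' {g | g ^ 2 = 1 ∧ g ≠ 1})) ∧
    (∀ a : A, μ ((2 : ℤ) • a) = 0) := by
  subst hπ
  have hadd (a b : A) : μ (a + b) = μ a + μ b := by rw [hμ, hlam, map_zero, add_zero]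
  have hconj_neg (q : (G →₀ ℤ) ⧸ relQ G) : conjQ q = -q := by
    induction q using QuotientAddGroup.induction_on with
    | H x => exact (hconjQ x).trans (mk'_conjHom x)
  refine ⟨hadd, fun a => ?_, fun a => ?_⟩
  · obtain ⟨x, hx⟩ := QuotientAddGroup.mk'_surjective (relQ G) (μ a)
    have hfixed := hfix a
    rw [← hx, hconjQ] at hfixed
    rw [← hx]
    exact mk_mem_involutionSubgroup_of_conjHom_eq (conjHom_eq_self_of_mk'_eq hfixed)
  · rw [two_zsmul, hadd, ← neg_eq_iff_add_eq_zero, ← hconj_neg, hfix]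

theorem stmt2 (A : Type*) [AddCommGroup A] (G : Type*) [Group G]
    (π : (G →₀ ℤ) →+ (G →₀ ℤ) ⧸ relQ G) (hπ : π = QuotientAddGroup.mk' (relQ G))
    (conjQ : ((G →₀ ℤ) ⧸ relQ G) →+ ((G →₀ ℤ) ⧸ relQ G))
    (hconjQ : ∀ x : G →₀ ℤ, conjQ (π x) = π (conjHom G x))
    (μ : A → (G →₀ ℤ) ⧸ relQ G) (lam : A → A → (G →₀ ℤ))
    (hbil : ∀ a b c : A, lam (a + b) c = lam a c + lam b c ∧
      lam a (b + c) = lam a b + lam a c)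
    (hlam : ∀ a b : A, lam a b = 0)
    (hμ : ∀ a b : A, μ (a + b) = μ a + μ b + π (lam a b))
    (hfix : ∀ a : A, conjQ (μ a) = μ a) :
    (∀ a b : A, μ (a + b) = μ a + μ b) ∧
    (∀ a : A, μ a ∈ AddSubgroup.closure
      ((fun t : G => π (Finsupp.single t 1)) '' {g | g ^ 2 = 1 ∧ g ≠ 1})) ∧
    (∀ a : A, μ ((2 : ℤ) • a) = 0) :=
  stmt2_general A G π hπ conjQ hconjQ μ lam hlam hμ hfix
end

section
/- Let G be a group and let ε₁,...,ε_m ∈ {+1, −1} and g₁,...,g_m ∈ G. Then the image of Σᵢ εᵢ gᵢ vanishes in the quotient abelian group Z[G]/⟨g − g⁻¹ : g ∈ G⟩ if and only if there exist exponents e₁,...,e_m ∈ {+1, −1} such that Σᵢ εᵢ gᵢ^{eᵢ} = 0 in Z[G]. -/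
/-! Every generator `g - g⁻¹` of `relMinus G` has antisymmetric coefficients, `x h⁻¹ = -x h`,
so every element of `relMinus G` does. For `x = ∑ εᵢ gᵢ` with signs `εᵢ = ±1` this forces every
term `εᵢ gᵢ` to have a partner `εⱼ gⱼ` with `gⱼ ∈ {gᵢ, gᵢ⁻¹}` and `εⱼ = -εᵢ`; choosing
`eⱼ = ±1` with `gⱼ ^ eⱼ = gᵢ` cancels the pair, and induction on the number of terms gives
the exponents. Conversely `εᵢ gᵢ - εᵢ gᵢ ^ eᵢ` is `0` or `εᵢ (gᵢ - gᵢ⁻¹)`. -/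

/-- The subgroup of the integral group ring `G →₀ ℤ` generated by all
elements `g - g⁻¹` for `g ∈ G`. -/
noncomputable def relMinus (G : Type*) [Group G] : AddSubgroup (G →₀ ℤ) :=
  AddSubgroup.closure {x | ∃ g : G, x = Finsupp.single g 1 - Finsupp.single g⁻¹ 1}

open Finsupp

section

variable {G : Type*} [Group G]

theorem single_sub_single_zpow_mem_relMinus {k : ℤ} (hk : k = 1 ∨ k = -1) (a : G) (n : ℤ) :
    single a n - single (a ^ k) n ∈ relMinus G := by
  rcases hk with rfl | rfl
  · simp
  · have hgen : single a 1 - single a⁻¹ 1 ∈ relMinus G :=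
      AddSubgroup.subset_closure ⟨a, rfl⟩
    simpa [smul_sub, smul_single] using AddSubgroup.zsmul_mem _ hgen n

variable (G) in
def invAntisymm : AddSubgroup (G →₀ ℤ) where
  carrier := {x | ∀ h, x h⁻¹ = -x h}
  add_mem' ha hb h := by simp only [Finsupp.add_apply, ha h, hb h, neg_add]
  zero_mem' := by simp
  neg_mem' ha h := by simp [ha h]

theorem relMinus_le_invAntisymm : relMinus G ≤ invAntisymm G := by
  classical
  refine AddSubgroup.closure_le _ |>.mpr ?_
  rintro _ ⟨a, rfl⟩ h
  simp only [coe_sub, Pi.sub_apply, single_apply, inv_inj]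
  split_ifs <;> subst_vars <;> simp_all

theorem exists_zpow_eq_of_eq_or_eq_inv {a b : G} (h : b = a ∨ b = a⁻¹) :
    ∃ k : ℤ, (k = 1 ∨ k = -1) ∧ b ^ k = a := by
  rcases h with rfl | rfl
  · exact ⟨1, .inl rfl, zpow_one b⟩
  · exact ⟨-1, .inr rfl, by simp⟩

section

variable {ι : Type*} {ε : ι → ℤ} (hε : ∀ i, ε i = 1 ∨ ε i = -1) (g : ι → G)
include hε

-- If every partner of `i₀` had the sign `ε i₀`, then `ε i₀ • (x a + x a⁻¹)` would count the
-- indices with `g i ∈ {a, a⁻¹}`, which is positive, although `x a⁻¹ = -x a`.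
theorem exists_opposite_partner {s : Finset ι}
    (hx : ∑ i ∈ s, single (g i) (ε i) ∈ invAntisymm G) {i₀ : ι} (hi₀ : i₀ ∈ s) :
    ∃ j ∈ s, j ≠ i₀ ∧ (g j = g i₀ ∨ g j = (g i₀)⁻¹) ∧ ε j = -ε i₀ := by
  classical
  by_contra! hno
  have hsign : ∀ j ∈ s, g j = g i₀ ∨ g j = (g i₀)⁻¹ → ε i₀ * ε j = 1 := by
    intro j hj hgj
    by_cases hji₀ : j = i₀
    · rcases hε i₀ with h | h <;> simp [hji₀, h]
    · have := hno j hj hji₀ hgj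
      rcases hε i₀ with h | h <;> rcases hε j with h' | h' <;> simp_all
  have hcount : ∀ h, h = g i₀ ∨ h = (g i₀)⁻¹ →
      ε i₀ * (∑ i ∈ s, single (g i) (ε i)) h = (s.filter fun i => g i = h).card := by
    rintro h hh
    rw [finsetSum_apply, Finset.mul_sum, Finset.card_eq_sum_ones, Nat.cast_sum,
      Finset.sum_filter]
    refine Finset.sum_congr rfl fun i hi => ?_
    by_cases hgi : g i = h
    · simp [hgi, hsign i hi (hgi ▸ hh)]
    · simp [hgi]
  have hpos : 0 < (s.filter fun i => g i = g i₀).card :=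
    Finset.card_pos.mpr ⟨i₀, by simp [hi₀]⟩
  have h1 := hcount (g i₀) (.inl rfl)
  have h2 := hcount (g i₀)⁻¹ (.inr rfl)
  rw [hx (g i₀), mul_neg] at h2
  omega

theorem exists_signs_sum_single_zpow_eq_zero [DecidableEq ι] (s : Finset ι)
    (hx : ∑ i ∈ s, single (g i) (ε i) ∈ invAntisymm G) :
    ∃ e : ι → ℤ, (∀ i, e i = 1 ∨ e i = -1) ∧ ∑ i ∈ s, single (g i ^ e i) (ε i) = 0 := by
  induction s using Finset.strongInduction with
  | H s ih =>
  rcases s.eq_empty_or_nonempty with rfl | ⟨i₀, hi₀⟩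
  · exact ⟨1, fun _ => .inl rfl, by simp⟩
  obtain ⟨j, hj, hji₀, hgj, hεj⟩ := exists_opposite_partner hε g hx hi₀
  obtain ⟨k, hk, hgjk⟩ := exists_zpow_eq_of_eq_or_eq_inv hgj
  set t := (s.erase i₀).erase j
  have hj' : j ∈ s.erase i₀ := Finset.mem_erase.mpr ⟨hji₀, hj⟩
  have hsplit (f : ι → G →₀ ℤ) : ∑ i ∈ s, f i = ∑ i ∈ t, f i + f j + f i₀ := by
    rw [← Finset.sum_erase_add s f hi₀, ← Finset.sum_erase_add _ f hj']
  have hpair : single (g j) (ε j) + single (g i₀) (ε i₀) ∈ invAntisymm G := by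
    have := single_sub_single_zpow_mem_relMinus hk (g j) (ε i₀)
    rw [hεj, ← hgjk, single_neg, neg_add_eq_sub, ← neg_sub]
    exact relMinus_le_invAntisymm (neg_mem this)
  have ht : ∑ i ∈ t, single (g i) (ε i) ∈ invAntisymm G := by
    have := sub_mem hx hpair
    rwa [hsplit, add_assoc, add_sub_cancel_right] at this
  obtain ⟨e, he, hsum⟩ := ih t
    ((Finset.erase_subset _ _).trans_ssubset (Finset.erase_ssubset hi₀)) ht
  let e' := Function.update (Function.update e i₀ 1) j k
  have he'j : e' j = k := Function.update_self ..
  have he'i₀ : e' i₀ = 1 := by simp [e', hji₀.symm]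
  have he't : ∀ i ∈ t, e' i = e i := fun i hi => by
    obtain ⟨hij, hi⟩ := Finset.mem_erase.mp hi
    simp [e', hij, Finset.ne_of_mem_erase hi]
  refine ⟨e', fun i => ?_, ?_⟩
  · simp only [e', Function.update_apply]
    split_ifs
    exacts [hk, .inl rfl, he i]
  · rw [hsplit, Finset.sum_congr rfl fun i hi => by rw [he't i hi], hsum, he'j, he'i₀, hgjk,
      zpow_one, hεj, single_neg, zero_add, neg_add_cancel]

end

end

theorem stmt4 (G : Type*) [Group G] (m : ℕ)
    (ε : Fin m → ℤ) (hε : ∀ i, ε i = 1 ∨ ε i = -1) (g : Fin m → G) :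
    ((QuotientAddGroup.mk' (relMinus G)) (∑ i, Finsupp.single (g i) (ε i)) = 0) ↔
    ∃ e : Fin m → ℤ, (∀ i, e i = 1 ∨ e i = -1) ∧
      (∑ i, Finsupp.single (g i ^ (e i)) (ε i)) = (0 : G →₀ ℤ) := by
  rw [QuotientAddGroup.mk'_apply, QuotientAddGroup.eq_zero_iff]
  constructor
  · intro hmem
    exact exists_signs_sum_single_zpow_eq_zero hε g _ (relMinus_le_invAntisymm hmem)
  · rintro ⟨e, he, hzero⟩
    rw [← sub_zero (∑ i, _), ← hzero, ← Finset.sum_sub_distrib]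
    exact sum_mem fun i _ => single_sub_single_zpow_mem_relMinus (he i) (g i) (ε i)
end

section
/- Let G be a group and Q = Z[G]/⟨g + g⁻¹, 1⟩. Choose a set S of representatives for the orbits of the inversion involution g ↦ g⁻¹ on the set {g ∈ G : g² ≠ 1}. Then Q is isomorphic as an abelian group to the direct sum of the F₂-vector space with basis T = {g ∈ G : g² = 1, g ≠ 1} and the free abelian group with basis S. -/
/-! The class `[g]` of `g` in `Q` satisfies `[1] = 0` and `[g⁻¹] = -[g]`, and these relations
present `Q`. For a nontrivial involution `t` they give `2 [t] = 0`, and for `g ∉ S` with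
`g² ≠ 1` they give `[g] = -[g⁻¹]` with `g⁻¹ ∈ S`. Reading off coordinates this way is
compatible with the relations and inverts the obvious map sending basis vectors to their
classes. -/

open Finsupp

theorem ZMod.addMonoidHom_ext {n : ℕ} {A : Type*} [AddGroup A] {f f' : ZMod n →+ A}
    (h : f 1 = f' 1) : f = f' :=
  (AddMonoidHom.cancel_right (f := Int.castAddHom (ZMod n)) ZMod.intCast_surjective).1 <|
    AddMonoidHom.ext_int (by simpa using h)

theorem sq_eq_one_iff_inv_eq_self {G : Type*} [Group G] {g : G} : g ^ 2 = 1 ↔ g⁻¹ = g := by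
  rw [sq, mul_eq_one_iff_inv_eq]

section

variable {G : Type*} [Group G] {A : Type*} [AddCommGroup A]

abbrev NontrivialInvolutions (G : Type*) [Group G] := {g : G // g ^ 2 = 1 ∧ g ≠ 1}

noncomputable def relQClass (g : G) : (G →₀ ℤ) ⧸ relQ G :=
  QuotientAddGroup.mk (single g 1)

theorem relQ_le_ker (f : (G →₀ ℤ) →+ A) (h₁ : f (single 1 1) = 0)
    (hinv : ∀ g, f (single g 1) + f (single g⁻¹ 1) = 0) : relQ G ≤ f.ker := by
  refine (AddSubgroup.closure_le _).2 ?_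
  rintro x (rfl | ⟨g, rfl⟩)
  · exact h₁
  · simpa using hinv g

noncomputable def relQLift (f : G → A) (h₁ : f 1 = 0) (hinv : ∀ g, f g + f g⁻¹ = 0) :
    (G →₀ ℤ) ⧸ relQ G →+ A :=
  QuotientAddGroup.lift (relQ G) (liftAddHom fun g => zmultiplesHom A (f g))
    (relQ_le_ker _ (by simpa using h₁) (by simpa using hinv))

@[simp]
theorem relQLift_relQClass (f : G → A) (h₁ : f 1 = 0) (hinv : ∀ g, f g + f g⁻¹ = 0) (g : G) :
    relQLift f h₁ hinv (relQClass g) = f g := by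
  simp [relQLift, relQClass]

theorem relQ_hom_ext {f f' : (G →₀ ℤ) ⧸ relQ G →+ A}
    (h : ∀ g, f (relQClass g) = f' (relQClass g)) : f = f' :=
  QuotientAddGroup.addMonoidHom_ext _ <| addHom_ext' fun g => AddMonoidHom.ext_int (h g)

theorem relQClass_one : relQClass (1 : G) = 0 :=
  (QuotientAddGroup.eq_zero_iff _).2 (AddSubgroup.subset_closure (Or.inl rfl))

theorem relQClass_add_inv (g : G) : relQClass g + relQClass g⁻¹ = 0 :=
  (QuotientAddGroup.eq_zero_iff _).2 (AddSubgroup.subset_closure (Or.inr ⟨g, rfl⟩))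

theorem relQClass_inv (g : G) : relQClass g⁻¹ = -relQClass g :=
  eq_neg_of_add_eq_zero_right (relQClass_add_inv g)

theorem two_zsmul_relQClass {g : G} (hg : g⁻¹ = g) : (2 : ℤ) • relQClass g = 0 := by
  simpa [two_zsmul, hg] using relQClass_add_inv g

open scoped Classical in
noncomputable def torsionCoord (g : G) : NontrivialInvolutions G →₀ ZMod 2 :=
  if h : g ^ 2 = 1 ∧ g ≠ 1 then single ⟨g, h⟩ 1 else 0

theorem torsionCoord_one : torsionCoord (1 : G) = 0 := by
  simp [torsionCoord]

theorem torsionCoord_add_inv (g : G) : torsionCoord g + torsionCoord g⁻¹ = 0 := by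
  by_cases h : g ^ 2 = 1 ∧ g ≠ 1
  · have hinv : g⁻¹ = g := sq_eq_one_iff_inv_eq_self.1 h.1
    rw [hinv, torsionCoord, dif_pos h, ← single_add]
    exact single_eq_zero.2 rfl
  · simp [torsionCoord, h]

open scoped Classical in
noncomputable def freeCoord (S : Set G) (g : G) : S →₀ ℤ :=
  if h : g ∈ S then single ⟨g, h⟩ 1 else if h' : g⁻¹ ∈ S then -single ⟨g⁻¹, h'⟩ 1 else 0

theorem freeCoord_of_notMem {S : Set G} {g : G} (hg : g ∉ S) (hg' : g⁻¹ ∉ S) :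
    freeCoord S g = 0 := by
  simp [freeCoord, hg, hg']

theorem freeCoord_add_inv {S : Set G} (hS : ∀ g ∈ S, g⁻¹ ∉ S) (g : G) :
    freeCoord S g + freeCoord S g⁻¹ = 0 := by
  by_cases hg : g ∈ S
  · simp [freeCoord, hg, hS g hg]
  by_cases hg' : g⁻¹ ∈ S
  · simp [freeCoord, hg, hg']
  · simp [freeCoord_of_notMem, hg, hg']

theorem freeCoord_one {S : Set G} (hS : ∀ g ∈ S, g⁻¹ ∉ S) : freeCoord S 1 = 0 :=
  have h₁ : (1 : G) ∉ S := fun h => hS 1 h (by simpa using h)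
  freeCoord_of_notMem h₁ (by simpa using h₁)

noncomputable def relQToProd {S : Set G} (hS : ∀ g ∈ S, g⁻¹ ∉ S) :
    (G →₀ ℤ) ⧸ relQ G →+ (NontrivialInvolutions G →₀ ZMod 2) × (S →₀ ℤ) :=
  (relQLift torsionCoord torsionCoord_one torsionCoord_add_inv).prod
    (relQLift (freeCoord S) (freeCoord_one hS) (freeCoord_add_inv hS))

noncomputable def torsionClass : (NontrivialInvolutions G →₀ ZMod 2) →+ (G →₀ ℤ) ⧸ relQ G :=
  liftAddHom fun t => ZMod.lift 2
    ⟨zmultiplesHom _ (relQClass t.1), two_zsmul_relQClass (sq_eq_one_iff_inv_eq_self.1 t.2.1)⟩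

@[simp]
theorem torsionClass_single (t : NontrivialInvolutions G) :
    torsionClass (single t 1) = relQClass t.1 := by
  rw [torsionClass, liftAddHom_apply_single, ← Int.cast_one, ZMod.lift_coe]
  exact one_zsmul _

noncomputable def freeClass (S : Set G) : (S →₀ ℤ) →+ (G →₀ ℤ) ⧸ relQ G :=
  liftAddHom fun s => zmultiplesHom _ (relQClass s.1)

@[simp]
theorem freeClass_single {S : Set G} (s : S) : freeClass S (single s 1) = relQClass s.1 := by
  simp [freeClass]

open scoped Classical in
theorem torsionClass_torsionCoord (g : G) :
    torsionClass (torsionCoord g) = if g ^ 2 = 1 then relQClass g else 0 := by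
  by_cases h : g ^ 2 = 1 ∧ g ≠ 1
  · simp [torsionCoord, h]
  · obtain rfl | h' : g = 1 ∨ g ^ 2 ≠ 1 := by tauto
    · simp [torsionCoord, relQClass_one]
    · simp [torsionCoord, h']

open scoped Classical in
theorem freeClass_freeCoord (S : Set G) (g : G) :
    freeClass S (freeCoord S g) = if g ∈ S ∨ g⁻¹ ∈ S then relQClass g else 0 := by
  by_cases hg : g ∈ S
  · simp [freeCoord, hg]
  by_cases hg' : g⁻¹ ∈ S
  · simp [freeCoord, hg, hg', relQClass_inv]
  · simp [freeCoord, hg, hg']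

noncomputable def relQOfProd (S : Set G) :
    (NontrivialInvolutions G →₀ ZMod 2) × (S →₀ ℤ) →+ (G →₀ ℤ) ⧸ relQ G :=
  torsionClass.coprod (freeClass S)

variable {S : Set G} (hS : ∀ g ∈ S, g⁻¹ ∉ S)

theorem relQOfProd_comp_relQToProd (hcover : ∀ g : G, g ^ 2 ≠ 1 → g ∈ S ∨ g⁻¹ ∈ S) :
    (relQOfProd S).comp (relQToProd hS) = AddMonoidHom.id _ := by
  refine relQ_hom_ext fun g => ?_
  simp only [relQOfProd, relQToProd, AddMonoidHom.comp_apply, AddMonoidHom.coprod_apply,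
    AddMonoidHom.prod_apply, relQLift_relQClass, torsionClass_torsionCoord, freeClass_freeCoord,
    AddMonoidHom.id_apply]
  by_cases h : g ^ 2 = 1
  · have hinv : g⁻¹ = g := sq_eq_one_iff_inv_eq_self.1 h
    have hg : g ∉ S := fun hg => hS g hg (by rwa [hinv])
    simp [h, hg, hinv]
  · simp [h, hcover g h]

theorem relQToProd_comp_relQOfProd :
    (relQToProd hS).comp (relQOfProd S) = AddMonoidHom.id _ := by
  rw [relQOfProd, AddMonoidHom.comp_coprod, ← AddMonoidHom.coprod_inl_inr]
  congr 1
  · refine addHom_ext' fun t => ZMod.addMonoidHom_ext ?_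
    have hinv : t.1⁻¹ = t.1 := sq_eq_one_iff_inv_eq_self.1 t.2.1
    have ht : t.1 ∉ S := fun ht => hS _ ht (by rwa [hinv])
    simp [relQToProd, torsionCoord, t.2, freeCoord_of_notMem ht (by rwa [hinv])]
  · refine addHom_ext' fun s => AddMonoidHom.ext_int ?_
    have hs : s.1 ^ 2 ≠ 1 := fun h => hS s s.2 <| (sq_eq_one_iff_inv_eq_self.1 h).symm ▸ s.2
    simp [relQToProd, torsionCoord, freeCoord, hs]

end

theorem stmt14 (G : Type*) [Group G] (S : Set G)
    (hS : ∀ g ∈ S, g ^ 2 ≠ 1)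
    (hrep : ∀ g : G, g ^ 2 ≠ 1 →
      ((g ∈ S ∧ g⁻¹ ∉ S) ∨ (g ∉ S ∧ g⁻¹ ∈ S))) :
    Nonempty (((G →₀ ℤ) ⧸ relQ G) ≃+
      (({g : G // g ^ 2 = 1 ∧ g ≠ 1} →₀ ZMod 2) × (S →₀ ℤ))) := by
  have hdisj : ∀ g ∈ S, g⁻¹ ∉ S := fun g hg =>
    ((hrep g (hS g hg)).resolve_right fun h => h.1 hg).2
  have hcover : ∀ g : G, g ^ 2 ≠ 1 → g ∈ S ∨ g⁻¹ ∈ S := fun g hg =>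
    (hrep g hg).imp And.left And.right
  exact ⟨(relQToProd hdisj).toAddEquiv (relQOfProd S) (relQOfProd_comp_relQToProd hdisj hcover)
    (relQToProd_comp_relQOfProd hdisj)⟩
end

section
/- Let G be a group and Q = Z[G]/⟨g + g⁻¹, 1⟩, with conj the involution of Q induced by g ↦ g⁻¹. The subgroup {ζ ∈ Q : ζ = conj(ζ)} is an elementary abelian 2-group (every element has order dividing 2). -/
/-! In `Q` every `g⁻¹` equals `-g`, so the involution induced by inversion is negation, and a
fixed point `ζ = -ζ` has order dividing `2`. -/

namespace relQ

variable {G : Type*} [Group G]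

theorem mk_single_inv (g : G) :
    QuotientAddGroup.mk' (relQ G) (Finsupp.single g⁻¹ 1) =
      -QuotientAddGroup.mk' (relQ G) (Finsupp.single g 1) := by
  refine eq_neg_of_add_eq_zero_right ?_
  rw [← map_add, ← AddMonoidHom.mem_ker, QuotientAddGroup.ker_mk']
  exact AddSubgroup.subset_closure (Or.inr ⟨g, rfl⟩)

theorem eq_neg_of_map_single (φ : ((G →₀ ℤ) ⧸ relQ G) →+ ((G →₀ ℤ) ⧸ relQ G))
    (hφ : ∀ g : G, φ (QuotientAddGroup.mk' (relQ G) (Finsupp.single g 1)) =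
      QuotientAddGroup.mk' (relQ G) (Finsupp.single g⁻¹ 1)) :
    φ = -AddMonoidHom.id _ := by
  refine QuotientAddGroup.addMonoidHom_ext _ (Finsupp.addHom_ext' fun g ↦ ?_)
  ext
  exact (hφ g).trans (mk_single_inv g)

end relQ

theorem stmt18 (G : Type*) [Group G]
    (conjQ : ((G →₀ ℤ) ⧸ relQ G) →+ ((G →₀ ℤ) ⧸ relQ G))
    (hconjQ : ∀ g : G,
      conjQ ((QuotientAddGroup.mk' (relQ G)) (Finsupp.single g 1)) =
        (QuotientAddGroup.mk' (relQ G)) (Finsupp.single g⁻¹ 1)) :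
    ∀ ζ : (G →₀ ℤ) ⧸ relQ G, conjQ ζ = ζ → ζ + ζ = 0 := by
  intro ζ hζ
  have hneg : conjQ ζ = -ζ := DFunLike.congr_fun (relQ.eq_neg_of_map_single conjQ hconjQ) ζ
  exact eq_neg_iff_add_eq_zero.mp (hζ.symm.trans hneg)
end
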